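/- Let v : ℝ³ × ℝ → ℝ³ be continuously differentiable, let k : ℝ³ × ℝ → ℝ be twice continuously differentiable, and define z := v + grad k. Suppose z satisfies the impulse equation in the geometric gauge, ∂z/∂t + Dz·v + (Dv)ᵀ·z = 0 everywhere. Then v satisfies the incompressible Euler momentum equation ∂v/∂t(x,t) + Dv(x,t) v(x,t) = −grad p(x,t) for all (x,t), with pressure determined by p := ∂k/∂t + v · grad k + ½ v·v (equivalently, dk/dt = p − ½ v·v along fluid trajectories). -/

import Mathlib

open Matrix

/-- The Jacobian matrix of a vector field `u : ℝ³ → ℝ³` at `x`: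
`(jacAt u x) i j = ∂uᵢ/∂xⱼ (x)`. -/
noncomputable def jacAt (u : (Fin 3 → ℝ) → (Fin 3 → ℝ)) (x : Fin 3 → ℝ) :
    Matrix (Fin 3) (Fin 3) ℝ :=
  fun i j => fderiv ℝ u x (Pi.single j 1) i

/-- The gradient of a scalar function `f : ℝ³ → ℝ` at `x`. -/
noncomputable def gradAt (f : (Fin 3 → ℝ) → ℝ) (x : Fin 3 → ℝ) : Fin 3 → ℝ :=
  fun i => fderiv ℝ f x (Pi.single i 1)

/-- The curl of a vector field `u : ℝ³ → ℝ³` at `x`. -/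
noncomputable def curlAt (u : (Fin 3 → ℝ) → (Fin 3 → ℝ)) (x : Fin 3 → ℝ) : Fin 3 → ℝ :=
  ![jacAt u x 2 1 - jacAt u x 1 2,
    jacAt u x 0 2 - jacAt u x 2 0,
    jacAt u x 1 0 - jacAt u x 0 1]

/-- The divergence of a vector field `u : ℝ³ → ℝ³` at `x`. -/
noncomputable def divAt (u : (Fin 3 → ℝ) → (Fin 3 → ℝ)) (x : Fin 3 → ℝ) : ℝ :=
  ∑ i, jacAt u x i i


/-!
Substituting `z = v + ∇k`, the impulse equation reads
`∂ₜv + Dv·v + ∂ₜ∇k + D(∇k)·v + (Dv)ᵀv + (Dv)ᵀ∇k = 0`, while the product rule gives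
`∇p = ∇∂ₜk + (Dv)ᵀ∇k + D(∇k)ᵀv + (Dv)ᵀv`. The two expressions agree because the second
derivative of the `C²` function `k` is symmetric: `∂ₜ∇k = ∇∂ₜk`, and the Hessian `D(∇k)` is
its own transpose.
-/

local notation "ℝ³" => Fin 3 → ℝ

section Calculus

variable {E F G : Type*} [NormedAddCommGroup E] [NormedSpace ℝ E] [NormedAddCommGroup F]
  [NormedSpace ℝ F] [NormedAddCommGroup G] [NormedSpace ℝ G]

lemma fderiv_clm_apply_const {c : E → F →L[ℝ] G} {x : E} (hc : DifferentiableAt ℝ c x)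
    (a : F) (v : E) : fderiv ℝ (fun y => c y a) x v = fderiv ℝ c x v a := by
  simp [fderiv_clm_apply hc (differentiableAt_const a)]

@[fun_prop]
lemma DifferentiableAt.dotProduct {ι : Type*} [Fintype ι] {u w : E → ι → ℝ} {x : E}
    (hu : DifferentiableAt ℝ u x) (hw : DifferentiableAt ℝ w x) :
    DifferentiableAt ℝ (fun y => u y ⬝ᵥ w y) x :=
  DifferentiableAt.fun_sum fun i _ => (differentiableAt_pi.1 hu i).mul (differentiableAt_pi.1 hw i)

lemma fderiv_slice_fst {f : E × F → G} {x : E} {t : F} (hf : DifferentiableAt ℝ f (x, t)) :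
    fderiv ℝ (fun y => f (y, t)) x = (fderiv ℝ f (x, t)).comp (.inl ℝ E F) :=
  (hf.hasFDerivAt.comp x (hasFDerivAt_prodMk_left x t)).fderiv

lemma deriv_slice_snd {f : E × ℝ → G} {x : E} {t : ℝ} (hf : DifferentiableAt ℝ f (x, t)) :
    deriv (fun s => f (x, s)) t = fderiv ℝ f (x, t) (0, 1) :=
  (hf.hasFDerivAt.comp_hasDerivAt t ((hasDerivAt_const t x).prodMk (hasDerivAt_id t))).deriv

end Calculus

section VectorCalculus

variable {f g : ℝ³ → ℝ} {u w : ℝ³ → ℝ³} {x : ℝ³}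

lemma gradAt_add (hf : DifferentiableAt ℝ f x) (hg : DifferentiableAt ℝ g x) :
    gradAt (fun y => f y + g y) x = gradAt f x + gradAt g x := by
  ext i
  simp [gradAt, fderiv_fun_add hf hg]

lemma gradAt_const_mul (c : ℝ) (hf : DifferentiableAt ℝ f x) :
    gradAt (fun y => c * f y) x = c • gradAt f x := by
  ext i
  simp [gradAt, fderiv_const_mul hf]

lemma gradAt_dotProduct (hu : DifferentiableAt ℝ u x) (hw : DifferentiableAt ℝ w x) :
    gradAt (fun y => u y ⬝ᵥ w y) x = (jacAt u x)ᵀ *ᵥ w x + (jacAt w x)ᵀ *ᵥ u x := by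
  ext i
  simp only [gradAt, dotProduct]
  rw [fderiv_fun_sum (A := fun j y => u y j * w y j) fun j _ =>
    (differentiableAt_pi.1 hu j).mul (differentiableAt_pi.1 hw j)]
  simp only [fderiv_fun_mul (differentiableAt_pi.1 hu _) (differentiableAt_pi.1 hw _),
    fderiv_apply hu, fderiv_apply hw]
  simp [mulVec, dotProduct, jacAt, Finset.sum_add_distrib, mul_comm, add_comm]

lemma jacAt_add (hu : DifferentiableAt ℝ u x) (hw : DifferentiableAt ℝ w x) :
    jacAt (fun y => u y + w y) x = jacAt u x + jacAt w x := by
  ext i j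
  simp [jacAt, fderiv_fun_add hu hw]

lemma jacAt_gradAt_apply (hf : DifferentiableAt ℝ (fderiv ℝ f) x) (i j : Fin 3) :
    jacAt (gradAt f) x i j = fderiv ℝ (fderiv ℝ f) x (Pi.single j 1) (Pi.single i 1) := by
  have hgrad : gradAt f = fun y i => fderiv ℝ f y (Pi.single i 1) := rfl
  rw [jacAt, hgrad, fderiv_pi fun i => hf.clm_apply (differentiableAt_const _)]
  simp [fderiv_clm_apply_const hf]

lemma transpose_jacAt_gradAt (hf : ContDiffAt ℝ 2 f x) :
    (jacAt (gradAt f) x)ᵀ = jacAt (gradAt f) x := by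
  have hf' : DifferentiableAt ℝ (fderiv ℝ f) x :=
    (hf.fderiv_right le_rfl).differentiableAt one_ne_zero
  ext i j
  simp only [transpose_apply, jacAt_gradAt_apply hf']
  exact (hf.isSymmSndFDerivAt (by simp)).eq _ _

end VectorCalculus

section SpaceTime

variable {v : ℝ³ × ℝ → ℝ³} {k : ℝ³ × ℝ → ℝ} {x : ℝ³} {t : ℝ}

lemma gradAt_slice (hk : DifferentiableAt ℝ k (x, t)) :
    gradAt (fun y => k (y, t)) x = fun i => fderiv ℝ k (x, t) (Pi.single i 1, 0) := by
  unfold gradAt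
  rw [fderiv_slice_fst hk]
  rfl

lemma contDiff_gradAt_slice {n : WithTop ℕ∞} (hk : ContDiff ℝ (n + 1) k) :
    ContDiff ℝ n (fun w : ℝ³ × ℝ => gradAt (fun y => k (y, w.2)) w.1) := by
  have hk_diff := hk.differentiable (by simp)
  rw [show (fun w : ℝ³ × ℝ => gradAt (fun y => k (y, w.2)) w.1)
      = fun w i => fderiv ℝ k w (Pi.single i 1, 0) from funext fun w => gradAt_slice (hk_diff w)]
  exact contDiff_pi.2 fun i => (hk.fderiv_right le_rfl).clm_apply contDiff_const

lemma contDiff_deriv_slice {n : WithTop ℕ∞} (hk : ContDiff ℝ (n + 1) k) :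
    ContDiff ℝ n (fun w : ℝ³ × ℝ => deriv (fun s => k (w.1, s)) w.2) := by
  have hk_diff := hk.differentiable (by simp)
  rw [show (fun w : ℝ³ × ℝ => deriv (fun s => k (w.1, s)) w.2)
      = fun w => fderiv ℝ k w (0, 1) from funext fun w => deriv_slice_snd (hk_diff w)]
  exact (hk.fderiv_right le_rfl).clm_apply contDiff_const

lemma deriv_gradAt_slice_comm (hk : ContDiff ℝ 2 k) :
    deriv (fun s => gradAt (fun y => k (y, s)) x) t
      = gradAt (fun y => deriv (fun s => k (y, s)) t) x := by
  have hk_diff := hk.differentiable two_ne_zero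
  have hDk : Differentiable ℝ (fderiv ℝ k) :=
    (hk.fderiv_right (m := 1) le_rfl).differentiable one_ne_zero
  have hDk_apply (a) : Differentiable ℝ (fun w => fderiv ℝ k w a) :=
    fun w => (hDk w).clm_apply (differentiableAt_const a)
  simp only [gradAt_slice (hk_diff _), deriv_slice_snd (hk_diff _)]
  rw [deriv_pi (φ := fun s i => fderiv ℝ k (x, s) (Pi.single i 1, 0)) fun i =>
    (hDk_apply _).comp ((differentiable_const x).prodMk differentiable_id) t]
  ext i
  rw [gradAt_slice (k := fun w => fderiv ℝ k w (0, 1)) (hDk_apply _ _),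
    deriv_slice_snd (f := fun w => fderiv ℝ k w (Pi.single i 1, 0)) (hDk_apply _ _)]
  simp only [fderiv_clm_apply_const (hDk _)]
  exact (hk.contDiffAt.isSymmSndFDerivAt (by simp)).eq _ _

lemma differentiableAt_gradAt_slice_fst (hk : ContDiff ℝ 2 k) :
    DifferentiableAt ℝ (gradAt (fun y => k (y, t))) x :=
  ((contDiff_gradAt_slice (n := 1) hk).differentiable one_ne_zero).comp
    (differentiable_id.prodMk (differentiable_const t)) x

lemma differentiableAt_gradAt_slice_snd (hk : ContDiff ℝ 2 k) :
    DifferentiableAt ℝ (fun s => gradAt (fun y => k (y, s)) x) t :=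
  ((contDiff_gradAt_slice (n := 1) hk).differentiable one_ne_zero).comp
    ((differentiable_const x).prodMk differentiable_id) t

lemma differentiableAt_deriv_slice_fst (hk : ContDiff ℝ 2 k) :
    DifferentiableAt ℝ (fun y => deriv (fun s => k (y, s)) t) x :=
  ((contDiff_deriv_slice (n := 1) hk).differentiable one_ne_zero).comp
    (differentiable_id.prodMk (differentiable_const t)) x

lemma deriv_add_gradAt_slice (hv : Differentiable ℝ v) (hk : ContDiff ℝ 2 k) :
    deriv (fun s => v (x, s) + gradAt (fun y => k (y, s)) x) t
      = deriv (fun s => v (x, s)) t + gradAt (fun y => deriv (fun s => k (y, s)) t) x := by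
  rw [deriv_fun_add (by fun_prop) (differentiableAt_gradAt_slice_snd hk),
    deriv_gradAt_slice_comm hk]

lemma jacAt_add_gradAt_slice (hv : Differentiable ℝ v) (hk : ContDiff ℝ 2 k) :
    jacAt (fun y => v (y, t) + gradAt (fun y' => k (y', t)) y) x
      = jacAt (fun y => v (y, t)) x + jacAt (gradAt (fun y => k (y, t))) x :=
  jacAt_add (by fun_prop) (differentiableAt_gradAt_slice_fst hk)

lemma gradAt_pressure (hv : Differentiable ℝ v) (hk : ContDiff ℝ 2 k) :
    gradAt (fun y => deriv (fun s => k (y, s)) t + v (y, t) ⬝ᵥ gradAt (fun y' => k (y', t)) y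
        + 1 / 2 * (v (y, t) ⬝ᵥ v (y, t))) x
      = gradAt (fun y => deriv (fun s => k (y, s)) t) x
        + ((jacAt (fun y => v (y, t)) x)ᵀ *ᵥ gradAt (fun y => k (y, t)) x
          + jacAt (gradAt (fun y => k (y, t))) x *ᵥ v (x, t))
        + (1 / 2 : ℝ) • ((jacAt (fun y => v (y, t)) x)ᵀ *ᵥ v (x, t)
          + (jacAt (fun y => v (y, t)) x)ᵀ *ᵥ v (x, t)) := by
  have hv_x : DifferentiableAt ℝ (fun y => v (y, t)) x := by fun_prop
  have hgk_x := differentiableAt_gradAt_slice_fst (x := x) (t := t) hk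
  have hdk_x := differentiableAt_deriv_slice_fst (x := x) (t := t) hk
  rw [gradAt_add (by fun_prop) (by fun_prop), gradAt_add hdk_x (by fun_prop),
    gradAt_dotProduct hv_x hgk_x, gradAt_const_mul _ (by fun_prop),
    gradAt_dotProduct hv_x hv_x, transpose_jacAt_gradAt (by fun_prop)]

end SpaceTime

/-- If `z = v + grad k` satisfies the impulse equation in the geometric gauge,
`∂z/∂t + Dz·v + (Dv)ᵀ·z = 0`, then `v` satisfies the incompressible Euler
momentum equation `∂v/∂t + Dv·v = −grad p` with pressure
`p = ∂k/∂t + v · grad k + ½ v·v`. -/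
theorem impulse_implies_euler
    (v : (Fin 3 → ℝ) × ℝ → (Fin 3 → ℝ)) (hv : ContDiff ℝ 1 v)
    (k : (Fin 3 → ℝ) × ℝ → ℝ) (hk : ContDiff ℝ 2 k)
    (z : (Fin 3 → ℝ) × ℝ → (Fin 3 → ℝ))
    (hz : ∀ (x : Fin 3 → ℝ) (t : ℝ),
      z (x, t) = v (x, t) + gradAt (fun y => k (y, t)) x)
    (himp : ∀ (x : Fin 3 → ℝ) (t : ℝ),
      deriv (fun s => z (x, s)) t
        + jacAt (fun y => z (y, t)) x *ᵥ v (x, t)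
        + (jacAt (fun y => v (y, t)) x)ᵀ *ᵥ z (x, t) = 0)
    (p : (Fin 3 → ℝ) × ℝ → ℝ)
    (hp : ∀ (x : Fin 3 → ℝ) (t : ℝ),
      p (x, t) = deriv (fun s => k (x, s)) t
        + v (x, t) ⬝ᵥ gradAt (fun y => k (y, t)) x
        + (1 / 2) * (v (x, t) ⬝ᵥ v (x, t))) :
    ∀ (x : Fin 3 → ℝ) (t : ℝ),
      deriv (fun s => v (x, s)) t + jacAt (fun y => v (y, t)) x *ᵥ v (x, t)
        = -gradAt (fun y => p (y, t)) x := by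
  intro x t
  have hv_diff := hv.differentiable one_ne_zero
  have himp_xt := himp x t
  simp only [hz] at himp_xt
  simp only [hp]
  rw [deriv_add_gradAt_slice hv_diff hk, jacAt_add_gradAt_slice hv_diff hk] at himp_xt
  rw [gradAt_pressure hv_diff hk]
  simp only [add_mulVec, mulVec_add] at himp_xt ⊢
  linear_combination (norm := module) himp_xt
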